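/- Let (X, ω) be a symplectic vector space (ω sesquilinear, skew-Hermitian, non-degenerate) and λ₁,…,λ_k linear subspaces with dim X/(λ₁+⋯+λ_k) < ∞. Then dim(λ₁^ω ∩ ⋯ ∩ λ_k^ω) ≤ dim X/(λ₁+⋯+λ_k). If moreover each λ_j is isotropic (λ_j ⊆ λ_j^ω), then dim(λ₁ ∩ ⋯ ∩ λ_k) ≤ dim X/(λ₁+⋯+λ_k). -/
import Mathlib


universe u

/-- The annihilator `λ^ω = {y ∈ X : ω(x,y) = 0 for all x ∈ λ}` of a subspace of a
complex vector space with a sesquilinear form `ω` (linear in the first,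
conjugate-linear in the second variable). -/
noncomputable def ann {X : Type*} [AddCommGroup X] [Module ℂ X]
    (ω : X →ₗ[ℂ] X →ₗ⋆[ℂ] ℂ) (l : Submodule ℂ X) : Submodule ℂ X :=
  ⨅ x ∈ l, LinearMap.ker (ω x)

/-- In a symplectic vector space `(X,ω)` (sesquilinear, skew-Hermitian,
non-degenerate), for subspaces `λ₁,…,λ_k` with `dim X/(λ₁+⋯+λ_k) < ∞` we have
`dim (λ₁^ω ∩ ⋯ ∩ λ_k^ω) ≤ dim X/(λ₁+⋯+λ_k)`, and if each `λ_j` is isotropic,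
then also `dim (λ₁ ∩ ⋯ ∩ λ_k) ≤ dim X/(λ₁+⋯+λ_k)`. -/
theorem dim_ann_inter_le {X : Type*} [AddCommGroup X] [Module ℂ X]
    (ω : X →ₗ[ℂ] X →ₗ⋆[ℂ] ℂ)
    (hskew : ∀ x y, ω y x = - (starRingEnd ℂ) (ω x y))
    (hnd : ∀ x, (∀ y, ω x y = 0) → x = 0)
    (k : ℕ) (l : Fin k → Submodule ℂ X)
    [FiniteDimensional ℂ (X ⧸ ⨆ j, l j)] :
    Module.rank ℂ ↥(⨅ j, ann ω (l j)) ≤ Module.rank ℂ (X ⧸ ⨆ j, l j) ∧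
    ((∀ j, l j ≤ ann ω (l j)) →
      Module.rank ℂ ↥(⨅ j, l j) ≤ Module.rank ℂ (X ⧸ ⨆ j, l j)) := by
  set L : Submodule ℂ X := ⨆ j, l j with hL
  set A : Submodule ℂ X := ⨅ j, ann ω (l j) with hA
  -- for y ∈ A, the map x ↦ ω x y is linear and vanishes on L
  have hmem : ∀ y ∈ A, ∀ x ∈ L, ω x y = 0 := by
    intro y hy
    have hyj : ∀ j, ∀ x ∈ l j, ω x y = 0 := by
      intro j x hx
      have := Submodule.mem_iInf (fun j => ann ω (l j)) |>.mp hy j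
      simp only [ann, Submodule.mem_iInf, LinearMap.mem_ker] at this
      exact this x hx
    -- {x | ω x y = 0} is a submodule
    let g : X →ₗ[ℂ] ℂ :=
      { toFun := fun x => ω x y
        map_add' := fun a b => by simp
        map_smul' := fun c a => by simp }
    have : L ≤ LinearMap.ker g := by
      refine iSup_le fun j => fun x hx => ?_
      simpa [g] using hyj j x hx
    intro x hx
    exact this hx
  -- the map A → Dual (X ⧸ L)
  have gdef : ∀ y : A, X →ₗ[ℂ] ℂ :=
    fun y =>
      { toFun := fun x => ω x y
        map_add' := fun a b => by simp
        map_smul' := fun c a => by simp }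
  let g : A → (X →ₗ[ℂ] ℂ) := fun y =>
    { toFun := fun x => ω x (y : X)
      map_add' := fun a b => by simp
      map_smul' := fun c a => by simp }
  have hker : ∀ y : A, L ≤ LinearMap.ker (g y) := fun y x hx => by
    simpa [g] using hmem y y.2 x hx
  let jmap : A → Module.Dual ℂ (X ⧸ L) := fun y => L.liftQ (g y) (hker y)
  have jadd : ∀ y z : A, jmap (y + z) = jmap y + jmap z := by
    intro y z
    refine Submodule.linearMap_qext _ ?_
    ext x
    simp [jmap, g]
  have jzero : jmap 0 = 0 := by
    refine Submodule.linearMap_qext _ ?_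
    ext x
    simp [jmap, g]
  have jinj : ∀ y : A, jmap y = 0 → y = 0 := by
    intro y hy
    have h0 : ∀ x, ω x (y : X) = 0 := by
      intro x
      have := congrArg (fun f => f (Submodule.Quotient.mk x)) hy
      simpa [jmap, g, Submodule.liftQ_apply] using this
    have : ∀ x, ω (y : X) x = 0 := by
      intro x; rw [hskew]; simp [h0 x]
    exact Subtype.ext (hnd _ this)
  have jsmul : ∀ (r : ℂ) (m : A),
      jmap ((starRingEnd ℂ r) • m) = r • jmap m := by
    intro r m
    refine Submodule.linearMap_qext _ ?_
    ext x
    simp [jmap, g, Submodule.coe_smul, map_smulₛₗ]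
  -- transfer linear independence
  have key : Module.rank ℂ A ≤ Module.rank ℂ (X ⧸ L) := by
    obtain ⟨⟨ι, b⟩⟩ := Module.Free.exists_basis (R := ℂ) (M := A)
    have hli := b.linearIndependent.map_of_injective_injective
      (starRingEnd ℂ) (AddMonoidHom.mk' jmap jadd)
      (fun r hr => by simpa using congrArg (starRingEnd ℂ) hr)
      (fun m hm => jinj m hm) jsmul
    calc Module.rank ℂ A = Cardinal.mk ι := b.mk_eq_rank''.symm
      _ ≤ Module.rank ℂ (Module.Dual ℂ (X ⧸ L)) := hli.cardinal_le_rank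
      _ = Module.rank ℂ (X ⧸ L) := by
          rw [← Module.finrank_eq_rank, ← Module.finrank_eq_rank,
            Subspace.dual_finrank_eq]
  refine ⟨key, fun hiso => ?_⟩
  exact le_trans (Submodule.rank_mono (iInf_mono hiso)) key
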